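/- Let n ≥ 2 and let φ be a Young function. Suppose Ψ' : L^φ(ℝⁿ,|x|²dx) → Mⁿ(ℝ) is a valuation and ξ ∈ C₀(ℝ). If Ψ'(h) = K(ξ∘h) for every non-negative h ∈ L^φ(ℝⁿ,|x|²dx) and for every non-positive h ∈ L^φ(ℝⁿ,|x|²dx), then Ψ'(h) = K(ξ∘h) for every h ∈ L^φ(ℝⁿ,|x|²dx). -/

import Mathlib

open MeasureTheory Filter Topology Matrix ENNReal

noncomputable section

/-- Euclidean space ℝⁿ. -/
abbrev Euc (n : ℕ) := EuclideanSpace ℝ (Fin n)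

/-- A Young function: `φ t = ∫₀ᵗ φ' s ds` for `t ≥ 0`, where `φ'` is nonnegative,
non-decreasing on `[0,∞)`, right-continuous, `φ' 0 = 0` and `φ' s → ∞` as `s → ∞`. -/
def IsYoungFunction (φ : ℝ → ℝ) : Prop :=
  ∃ φ' : ℝ → ℝ,
    (∀ s, 0 ≤ φ' s) ∧
    MonotoneOn φ' (Set.Ici 0) ∧
    (∀ s ∈ Set.Ici (0 : ℝ), ContinuousWithinAt φ' (Set.Ici s) s) ∧
    φ' 0 = 0 ∧
    Tendsto φ' atTop atTop ∧
    ∀ t ∈ Set.Ici (0 : ℝ), φ t = ∫ s in (0 : ℝ)..t, φ' s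

/-- The Δ₂-condition: `φ(2t) ≤ k φ(t)` for all `t ≥ T`. -/
def SatisfiesDeltaTwo (φ : ℝ → ℝ) : Prop :=
  ∃ T ≥ (0 : ℝ), ∃ k > (0 : ℝ), ∀ t ≥ T, φ (2 * t) ≤ k * φ t

/-- The complementary Young function `φ*`, as the Legendre transform
`φ*(t) = sup {s t - φ(s) : s ≥ 0}`. -/
def youngConj (φ : ℝ → ℝ) (t : ℝ) : ℝ :=
  sSup {y : ℝ | ∃ s ≥ (0 : ℝ), y = s * t - φ s}

/-- The weighted Lebesgue measure `|x|² dx` on ℝⁿ. -/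
def wMeasure (n : ℕ) : Measure (Euc n) :=
  volume.withDensity fun x => ENNReal.ofReal (‖x‖ ^ 2)

/-- Membership in the Orlicz space `L^φ(ℝⁿ, |x|²dx)`:
`∫ φ(δ|h(x)|) |x|² dx < ∞` for every `δ > 0`. -/
def MemOrlicz (φ : ℝ → ℝ) {n : ℕ} (h : Euc n → ℝ) : Prop :=
  Measurable h ∧
    ∀ δ > (0 : ℝ), ∫⁻ x, ENNReal.ofReal (φ (δ * |h x|)) ∂(wMeasure n) < ⊤

/-- The Orlicz norm
`‖h‖_φ = sup { ∫ |h g| |x|² dx : g measurable, ∫ φ*(|g|) |x|² dx ≤ 1 }`. -/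
def orliczNorm (φ : ℝ → ℝ) {n : ℕ} (h : Euc n → ℝ) : ℝ≥0∞ :=
  ⨆ g ∈ {g : Euc n → ℝ | Measurable g ∧
      ∫⁻ x, ENNReal.ofReal (youngConj φ |g x|) ∂(wMeasure n) ≤ 1},
    ∫⁻ x, ENNReal.ofReal |h x * g x| ∂(wMeasure n)

/-- The moment matrix `K(h)` with entries `K_{ij}(h) = ∫ h(x) xᵢ xⱼ dx`. -/
def momentMatrix (n : ℕ) (h : Euc n → ℝ) : Matrix (Fin n) (Fin n) ℝ :=
  fun i j => ∫ x : Euc n, h x * x i * x j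

/-- `Ψ` is a valuation on `L^φ(ℝⁿ, |x|²dx)`:
`Ψ(h₁ ∨ h₂) + Ψ(h₁ ∧ h₂) = Ψ(h₁) + Ψ(h₂)`. -/
def IsValuation (φ : ℝ → ℝ) {n : ℕ}
    (Ψ : (Euc n → ℝ) → Matrix (Fin n) (Fin n) ℝ) : Prop :=
  ∀ h₁ h₂ : Euc n → ℝ, MemOrlicz φ h₁ → MemOrlicz φ h₂ →
    Ψ (fun x => max (h₁ x) (h₂ x)) + Ψ (fun x => min (h₁ x) (h₂ x)) = Ψ h₁ + Ψ h₂

/-- `Ψ` is `SL(n)` covariant: `Ψ(h ∘ ϑ⁻¹) = ϑ Ψ(h) ϑᵗ` for all `ϑ ∈ SL(n,ℝ)`. -/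
def IsSLCovariant (φ : ℝ → ℝ) {n : ℕ}
    (Ψ : (Euc n → ℝ) → Matrix (Fin n) (Fin n) ℝ) : Prop :=
  ∀ h : Euc n → ℝ, MemOrlicz φ h → ∀ ϑ : Matrix.SpecialLinearGroup (Fin n) ℝ,
    Ψ (fun x => h (WithLp.toLp 2 (((ϑ⁻¹ : Matrix.SpecialLinearGroup (Fin n) ℝ) :
        Matrix (Fin n) (Fin n) ℝ).mulVec x))) =
      (ϑ : Matrix (Fin n) (Fin n) ℝ) * Ψ h * (ϑ : Matrix (Fin n) (Fin n) ℝ)ᵀ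

/-- `Ψ` is continuous: `Ψ(h_k) → Ψ(h)` whenever `‖h_k − h‖_φ → 0`. -/
def IsOrliczContinuous (φ : ℝ → ℝ) {n : ℕ}
    (Ψ : (Euc n → ℝ) → Matrix (Fin n) (Fin n) ℝ) : Prop :=
  ∀ h : Euc n → ℝ, MemOrlicz φ h → ∀ hk : ℕ → Euc n → ℝ, (∀ k, MemOrlicz φ (hk k)) →
    Tendsto (fun k => orliczNorm φ (fun x => hk k x - h x)) atTop (𝓝 0) →
    Tendsto (fun k => Ψ (hk k)) atTop (𝓝 (Ψ h))

/-- `ξ ∈ C_φ(ℝ)`: `ξ` is continuous and `|ξ(β)| ≤ γ φ(|β|)` for some `γ ≥ 0`. -/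
def MemCphi (φ ξ : ℝ → ℝ) : Prop :=
  Continuous ξ ∧ ∃ γ ≥ (0 : ℝ), ∀ β : ℝ, |ξ β| ≤ γ * φ |β|

/-- The counter-clockwise rotation by `π/2` in `ℝ²`. -/
def rotHalfPi : Matrix (Fin 2) (Fin 2) ℝ := !![0, -1; 1, 0]

/-- A (nonempty) compact convex polytope: the convex hull of a nonempty finite set. -/
def IsPolytope {n : ℕ} (Q : Set (Euc n)) : Prop :=
  ∃ S : Finset (Euc n), S.Nonempty ∧ Q = convexHull ℝ (S : Set (Euc n))

/-- The moment matrix `M(Q)` of a polytope, with entries `∫_Q xᵢ xⱼ dx`. -/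
def polytopeMoment (n : ℕ) (Q : Set (Euc n)) : Matrix (Fin n) (Fin n) ℝ :=
  fun i j => ∫ x in Q, x i * x j

/-- A valuation on polytopes: `Y(P) + Y(Q) = Y(P ∪ Q) + Y(P ∩ Q)` whenever `P ∪ Q`
is a polytope. -/
def IsPolyValuation {n : ℕ} (Y : Set (Euc n) → Matrix (Fin n) (Fin n) ℝ) : Prop :=
  ∀ P Q : Set (Euc n), IsPolytope P → IsPolytope Q → IsPolytope (P ∪ Q) →
    Y P + Y Q = Y (P ∪ Q) + Y (P ∩ Q)

/-- `SL(n)` covariance on polytopes: `Y(ϑ Q) = ϑ Y(Q) ϑᵗ`. -/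
def IsPolySLCovariant {n : ℕ} (Y : Set (Euc n) → Matrix (Fin n) (Fin n) ℝ) : Prop :=
  ∀ Q : Set (Euc n), IsPolytope Q → ∀ ϑ : Matrix.SpecialLinearGroup (Fin n) ℝ,
    Y ((fun x : Euc n =>
        (WithLp.toLp 2 ((ϑ : Matrix (Fin n) (Fin n) ℝ).mulVec x : Fin n → ℝ) : Euc n)) '' Q) =
      (ϑ : Matrix (Fin n) (Fin n) ℝ) * Y Q * (ϑ : Matrix (Fin n) (Fin n) ℝ)ᵀ

/-- Continuity of `Y` with respect to the Hausdorff metric on polytopes. -/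
def IsPolyContinuous {n : ℕ} (Y : Set (Euc n) → Matrix (Fin n) (Fin n) ℝ) : Prop :=
  ∀ (Q : Set (Euc n)) (Qi : ℕ → Set (Euc n)), IsPolytope Q → (∀ i, IsPolytope (Qi i)) →
    Tendsto (fun i => Metric.hausdorffDist (Qi i) Q) atTop (𝓝 0) →
    Tendsto (fun i => Y (Qi i)) atTop (𝓝 (Y Q))

/-- `Y` is weak simple: constant on polytopes of dimension at most `n-1`. -/
def IsPolyWeakSimple {n : ℕ} (Y : Set (Euc n) → Matrix (Fin n) (Fin n) ℝ) : Prop :=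
  ∃ M₀ : Matrix (Fin n) (Fin n) ℝ, ∀ Q : Set (Euc n), IsPolytope Q →
    Module.finrank ℝ (vectorSpan ℝ Q) ≤ n - 1 → Y Q = M₀

/-- `Y` is simple: it vanishes on polytopes of dimension at most `n-1`. -/
def IsPolySimple {n : ℕ} (Y : Set (Euc n) → Matrix (Fin n) (Fin n) ℝ) : Prop :=
  ∀ Q : Set (Euc n), IsPolytope Q →
    Module.finrank ℝ (vectorSpan ℝ Q) ≤ n - 1 → Y Q = 0

/-- A closed cube in ℝⁿ: `{x : cᵢ ≤ xᵢ ≤ dᵢ}` with all side lengths equal. -/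
def IsClosedCube {n : ℕ} (C : Set (Euc n)) : Prop :=
  ∃ c d : Fin n → ℝ, (∀ i j, |c i - d i| = |c j - d j|) ∧
    C = {x : Euc n | ∀ i, c i ≤ x i ∧ x i ≤ d i}
/-!
Testing the valuation property on `h` and `0` gives `Ψ'(h) = Ψ'(h⁺) + Ψ'(h⁻)` with
`h⁺ = max h 0`, `h⁻ = min h 0`, so it remains to show `K(ξ∘h) = K(ξ∘h⁺) + K(ξ∘h⁻)`.
Since `ξ(0) = 0` this is pointwise true, and the only issue is the integrability of
`ξ(h^±) xᵢ xⱼ`, which is not assumed. Applied to indicators of `h^±` on disjoint sets,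
the valuation property makes `S ↦ ∫_S ξ(h^±) xᵢ xⱼ` finitely additive. That forces
integrability: if `∫ f⁺ = ∞`, σ-finiteness gives `T ⊆ {f > 0}` with
`0 < ∫_T f < ∞`, while the Bochner integrals of `f` over `{f > 0}` and `{f > 0} \ T`
both vanish.
-/

section SetIntegral

variable {α : Type*} [MeasurableSpace α] {μ : Measure α} [SigmaFinite μ] {f : α → ℝ}

theorem lintegral_ofReal_lt_top_of_setIntegral_union (hf : Measurable f)
    (hadd : ∀ s t, MeasurableSet s → MeasurableSet t → Disjoint s t →
      ∫ x in s ∪ t, f x ∂μ = ∫ x in s, f x ∂μ + ∫ x in t, f x ∂μ) :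
    ∫⁻ x, ENNReal.ofReal (f x) ∂μ < ∞ := by
  by_contra hinf
  set ν := μ.withDensity fun x => ENNReal.ofReal (f x)
  set P := {x | 0 < f x}
  have hP : MeasurableSet P := measurableSet_lt measurable_const hf
  have hνP : ν P = ∞ := by
    rw [withDensity_apply _ hP, setLIntegral_eq_of_support_subset (s := P)
      fun x hx => ENNReal.ofReal_pos.1 (pos_iff_ne_zero.2 hx)]
    exact not_lt_top_iff.1 hinf
  -- for `s ⊆ P` both sides are the junk value `0` when `ν s = ∞`
  have hsetIntegral : ∀ s ⊆ P, MeasurableSet s → ∫ x in s, f x ∂μ = (ν s).toReal := by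
    intro s hsP hs
    rw [integral_eq_lintegral_of_nonneg_ae
      (ae_restrict_of_forall_mem hs fun x hx => (hsP hx).le) hf.aestronglyMeasurable,
      withDensity_apply _ hs]
  obtain ⟨T, hT, hTP, hνT_pos, hνT_lt⟩ :=
    ν.exists_subset_measure_lt_top hP (hνP ▸ zero_lt_top)
  have hνPT : ν (P \ T) = ∞ := by
    have := measure_sdiff_add_inter (μ := ν) P hT
    rw [Set.inter_eq_right.2 hTP, hνP] at this
    exact (ENNReal.add_eq_top.1 this).resolve_right hνT_lt.ne
  have := hadd (P \ T) T (hP.diff hT) hT Set.disjoint_sdiff_left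
  rw [Set.sdiff_union_of_subset hTP, hsetIntegral P le_rfl hP,
    hsetIntegral _ Set.sdiff_subset (hP.diff hT), hsetIntegral T hTP hT, hνP, hνPT,
    ENNReal.toReal_top, zero_add] at this
  exact (ENNReal.toReal_pos hνT_pos.ne' hνT_lt.ne).ne this

theorem integrable_of_setIntegral_union (hf : Measurable f)
    (hadd : ∀ s t, MeasurableSet s → MeasurableSet t → Disjoint s t →
      ∫ x in s ∪ t, f x ∂μ = ∫ x in s, f x ∂μ + ∫ x in t, f x ∂μ) :
    Integrable f μ := by
  have integrable_posPart {g : α → ℝ} (hg : Measurable g)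
      (hadd : ∀ s t, MeasurableSet s → MeasurableSet t → Disjoint s t →
        ∫ x in s ∪ t, g x ∂μ = ∫ x in s, g x ∂μ + ∫ x in t, g x ∂μ) :
      Integrable (fun x => max (g x) 0) μ := by
    refine (lintegral_ofReal_ne_top_iff_integrable (by fun_prop)
      (ae_of_all _ fun x => le_max_right _ _)).1 ?_
    simpa using (lintegral_ofReal_lt_top_of_setIntegral_union hg hadd).ne
  have hneg := integrable_posPart (g := fun x => -f x) hf.neg fun s t hs ht hst => by
    simp only [integral_neg, hadd s t hs ht hst]; ring
  convert (integrable_posPart hf hadd).sub hneg using 1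
  ext x
  simp

end SetIntegral

theorem IsYoungFunction.map_zero {φ : ℝ → ℝ} (hφ : IsYoungFunction φ) : φ 0 = 0 := by
  obtain ⟨φ', -, -, -, -, -, hφφ'⟩ := hφ
  rw [hφφ' 0 Set.self_mem_Ici, intervalIntegral.integral_same]

section Orlicz

variable {φ : ℝ → ℝ} {n : ℕ}

theorem memOrlicz_zero (hφ0 : φ 0 = 0) : MemOrlicz φ (0 : Euc n → ℝ) :=
  ⟨measurable_const, fun δ _ => by simp [hφ0]⟩

theorem MemOrlicz.of_eq_or_eq_zero (hφ0 : φ 0 = 0) {h u : Euc n → ℝ} (hh : MemOrlicz φ h)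
    (hu : Measurable u) (huh : ∀ x, u x = h x ∨ u x = 0) : MemOrlicz φ u := by
  refine ⟨hu, fun δ hδ => (lintegral_mono fun x => ?_).trans_lt (hh.2 δ hδ)⟩
  rcases huh x with hx | hx <;> simp [hx, hφ0]

theorem MemOrlicz.indicator (hφ0 : φ 0 = 0) {u : Euc n → ℝ} (hu : MemOrlicz φ u)
    {s : Set (Euc n)} (hs : MeasurableSet s) : MemOrlicz φ (s.indicator u) :=
  hu.of_eq_or_eq_zero hφ0 (hu.1.indicator hs) fun x => by by_cases hx : x ∈ s <;> simp [hx]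

theorem IsValuation.map_indicator_union (hφ0 : φ 0 = 0)
    {Ψ : (Euc n → ℝ) → Matrix (Fin n) (Fin n) ℝ} (hΨ : IsValuation φ Ψ)
    (hΨ0 : Ψ 0 = 0) {u : Euc n → ℝ} (hu : MemOrlicz φ u)
    (hsign : (∀ x, 0 ≤ u x) ∨ ∀ x, u x ≤ 0)
    {s t : Set (Euc n)} (hs : MeasurableSet s) (ht : MeasurableSet t) (hst : Disjoint s t) :
    Ψ ((s ∪ t).indicator u) = Ψ (s.indicator u) + Ψ (t.indicator u) := by
  have hval := hΨ _ _ (hu.indicator hφ0 hs) (hu.indicator hφ0 ht)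
  have hcases : ∀ x,
      (s.indicator u x = (s ∪ t).indicator u x ∧ t.indicator u x = 0) ∨
        (s.indicator u x = 0 ∧ t.indicator u x = (s ∪ t).indicator u x) := fun x => by
    by_cases hxt : x ∈ t
    · exact .inr (by simp [hxt, Set.disjoint_right.1 hst hxt])
    · exact .inl (by by_cases hxs : x ∈ s <;> simp [hxs, hxt])
  rcases hsign with hu0 | hu0
  · have hmax : (fun x => max (s.indicator u x) (t.indicator u x)) = (s ∪ t).indicator u := by
      funext x
      rcases hcases x with ⟨h₁, h₂⟩ | ⟨h₁, h₂⟩ <;>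
        simp [h₁, h₂, Set.indicator_nonneg, hu0]
    have hmin : (fun x => min (s.indicator u x) (t.indicator u x)) = 0 := by
      funext x
      rcases hcases x with ⟨h₁, h₂⟩ | ⟨h₁, h₂⟩ <;>
        simp [h₁, h₂, Set.indicator_nonneg, hu0]
    rwa [hmax, hmin, hΨ0, add_zero] at hval
  · have hmax : (fun x => max (s.indicator u x) (t.indicator u x)) = 0 := by
      funext x
      rcases hcases x with ⟨h₁, h₂⟩ | ⟨h₁, h₂⟩ <;>
        simp [h₁, h₂, Set.indicator_nonpos, hu0]
    have hmin : (fun x => min (s.indicator u x) (t.indicator u x)) = (s ∪ t).indicator u := by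
      funext x
      rcases hcases x with ⟨h₁, h₂⟩ | ⟨h₁, h₂⟩ <;>
        simp [h₁, h₂, Set.indicator_nonpos, hu0]
    rwa [hmax, hmin, hΨ0, zero_add] at hval

end Orlicz

section MomentMatrix

variable {n : ℕ} {ξ : ℝ → ℝ}

theorem momentMatrix_zero : momentMatrix n 0 = 0 := by
  funext i j
  simp [momentMatrix]

theorem momentMatrix_comp_indicator_apply (hξ0 : ξ 0 = 0) (u : Euc n → ℝ)
    {s : Set (Euc n)} (hs : MeasurableSet s) (i j : Fin n) :
    momentMatrix n (fun x => ξ (s.indicator u x)) i j = ∫ x in s, ξ (u x) * x i * x j := by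
  rw [← integral_indicator hs]
  refine integral_congr_ae (ae_of_all _ fun x => ?_)
  by_cases hx : x ∈ s <;> simp [hx, hξ0]

theorem momentMatrix_add {f g : Euc n → ℝ}
    (hf : ∀ i j, Integrable fun x : Euc n => f x * x i * x j)
    (hg : ∀ i j, Integrable fun x : Euc n => g x * x i * x j) :
    momentMatrix n (fun x => f x + g x) = momentMatrix n f + momentMatrix n g := by
  funext i j
  rw [Matrix.add_apply, momentMatrix, momentMatrix, momentMatrix,
    ← integral_add (hf i j) (hg i j)]
  simp only [add_mul]

theorem integrable_moment_of_isValuation {φ : ℝ → ℝ} (hφ0 : φ 0 = 0)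
    {Ψ : (Euc n → ℝ) → Matrix (Fin n) (Fin n) ℝ} (hΨ : IsValuation φ Ψ)
    (hξ : Continuous ξ) (hξ0 : ξ 0 = 0) {u : Euc n → ℝ} (hu : MemOrlicz φ u)
    (hsign : (∀ x, 0 ≤ u x) ∨ ∀ x, u x ≤ 0)
    (hrep : ∀ s, MeasurableSet s →
      Ψ (s.indicator u) = momentMatrix n fun x => ξ (s.indicator u x))
    (i j : Fin n) :
    Integrable fun x : Euc n => ξ (u x) * x i * x j := by
  have hΨ0 : Ψ 0 = 0 := by
    simpa [hξ0, ← Pi.zero_def, momentMatrix_zero] using hrep ∅ MeasurableSet.empty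
  refine integrable_of_setIntegral_union (by have := hu.1; fun_prop) fun s t hs ht hst => ?_
  have := congrFun₂ (hΨ.map_indicator_union hφ0 hΨ0 hu hsign hs ht hst) i j
  rwa [hrep _ (hs.union ht), hrep s hs, hrep t ht, Matrix.add_apply,
    momentMatrix_comp_indicator_apply hξ0 u (hs.union ht),
    momentMatrix_comp_indicator_apply hξ0 u hs,
    momentMatrix_comp_indicator_apply hξ0 u ht] at this

end MomentMatrix

theorem representation_extends_from_signed_parts_general (n : ℕ)
    (φ : ℝ → ℝ) (hφ : IsYoungFunction φ)
    (Ψ' : (Euc n → ℝ) → Matrix (Fin n) (Fin n) ℝ) (hval : IsValuation φ Ψ')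
    (ξ : ℝ → ℝ) (hξc : Continuous ξ) (hξ0 : ξ 0 = 0)
    (hpos : ∀ h : Euc n → ℝ, MemOrlicz φ h → (∀ x, 0 ≤ h x) →
      Ψ' h = momentMatrix n fun x => ξ (h x))
    (hneg : ∀ h : Euc n → ℝ, MemOrlicz φ h → (∀ x, h x ≤ 0) →
      Ψ' h = momentMatrix n fun x => ξ (h x)) :
    ∀ h : Euc n → ℝ, MemOrlicz φ h → Ψ' h = momentMatrix n fun x => ξ (h x) := by
  intro h hh
  have hφ0 := hφ.map_zero
  set u : Euc n → ℝ := fun x => max (h x) 0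
  set v : Euc n → ℝ := fun x => min (h x) 0
  have hu0 : ∀ x, 0 ≤ u x := fun x => le_max_right _ _
  have hv0 : ∀ x, v x ≤ 0 := fun x => min_le_right _ _
  have hu : MemOrlicz φ u :=
    hh.of_eq_or_eq_zero hφ0 (hh.1.max measurable_const) fun x => max_choice _ _
  have hv : MemOrlicz φ v :=
    hh.of_eq_or_eq_zero hφ0 (hh.1.min measurable_const) fun x => min_choice _ _
  have hsplit : Ψ' h = Ψ' u + Ψ' v := by
    have hΨ0 : Ψ' 0 = 0 := by
      simpa [hξ0, ← Pi.zero_def, momentMatrix_zero] using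
        hpos 0 (memOrlicz_zero hφ0) fun _ => le_rfl
    simpa [hΨ0] using (hval h 0 hh (memOrlicz_zero hφ0)).symm
  have hiu := integrable_moment_of_isValuation hφ0 hval hξc hξ0 hu (.inl hu0) fun s hs =>
    hpos _ (hu.indicator hφ0 hs) (Set.indicator_nonneg fun x _ => hu0 x)
  have hiv := integrable_moment_of_isValuation hφ0 hval hξc hξ0 hv (.inr hv0) fun s hs =>
    hneg _ (hv.indicator hφ0 hs) (Set.indicator_nonpos fun x _ => hv0 x)
  have hξh : ∀ x, ξ (h x) = ξ (u x) + ξ (v x) := fun x => by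
    rcases le_total (h x) 0 with hx | hx <;> simp [u, v, hx, hξ0]
  rw [hsplit, hpos u hu hu0, hneg v hv hv0, ← momentMatrix_add hiu hiv]
  simp only [hξh]

/-- **Lemma 3.9.** Let `n ≥ 2`. If `Ψ'` is a valuation on `L^φ(ℝⁿ, |x|²dx)`,
`ξ ∈ C₀(ℝ)`, and `Ψ'(h) = K(ξ∘h)` holds for every non-negative and every
non-positive `h`, then it holds for every `h ∈ L^φ(ℝⁿ, |x|²dx)`. -/
theorem representation_extends_from_signed_parts (n : ℕ) (hn : 2 ≤ n)
    (φ : ℝ → ℝ) (hφ : IsYoungFunction φ)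
    (Ψ' : (Euc n → ℝ) → Matrix (Fin n) (Fin n) ℝ) (hval : IsValuation φ Ψ')
    (ξ : ℝ → ℝ) (hξc : Continuous ξ) (hξ0 : ξ 0 = 0)
    (hpos : ∀ h : Euc n → ℝ, MemOrlicz φ h → (∀ x, 0 ≤ h x) →
      Ψ' h = momentMatrix n fun x => ξ (h x))
    (hneg : ∀ h : Euc n → ℝ, MemOrlicz φ h → (∀ x, h x ≤ 0) →
      Ψ' h = momentMatrix n fun x => ξ (h x)) :
    ∀ h : Euc n → ℝ, MemOrlicz φ h → Ψ' h = momentMatrix n fun x => ξ (h x) :=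
  representation_extends_from_signed_parts_general n φ hφ Ψ' hval ξ hξc hξ0 hpos hneg

end
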